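/- Gauss's summation theorem: for complex a, b, c with Re(c-a-b) > 0 and c not a nonpositive integer, the sum over k ≥ 0 of ((a)_k (b)_k)/(k! (c)_k) equals Γ(c)Γ(c-a-b)/(Γ(c-a)Γ(c-b)). -/

import Mathlib

/-!
Write `F(c) = ∑ₖ (a)ₖ (b)ₖ / (k! (c)ₖ)`. Euler's limit `Γ(s) = lim n^s n! / (s)ₙ₊₁`
(`Complex.GammaSeq`) shows that the `k`-th term behaves like `Γ(c) / (Γ(a) Γ(b)) k^(a+b-c-1)`,
so the series converges absolutely. Telescoping gives the contiguous relation
`c (c-a-b) F(c) = (c-a) (c-b) F(c+1)`, and iterating it,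
`F(c) = (c-a)ₙ (c-b)ₙ / ((c)ₙ (c-a-b)ₙ) · F(c+n)` for every `n`.
As `n → ∞`, `F(c+n) → 1` by dominated convergence, while Euler's limit turns the Pochhammer
quotient into `Γ(c) Γ(c-a-b) / (Γ(c-a) Γ(c-b))`.
-/

open Filter Finset Topology Asymptotics Complex

/-- Rising factorial (Pochhammer symbol) `(x)_k = x(x+1)⋯(x+k-1)`. -/
noncomputable def poch (x : ℂ) (k : ℕ) : ℂ := ∏ i ∈ Finset.range k, (x + i)

lemma poch_zero (x : ℂ) : poch x 0 = 1 := by simp [poch]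

lemma poch_succ (x : ℂ) (k : ℕ) : poch x (k + 1) = poch x k * (x + k) :=
  prod_range_succ _ _

lemma poch_succ' (x : ℂ) (k : ℕ) : poch x (k + 1) = x * poch (x + 1) k := by
  rw [poch, poch, prod_range_succ', Nat.cast_zero, add_zero, mul_comm]
  congr 1
  exact prod_congr rfl fun i _ => by push_cast; ring

lemma poch_ne_zero {x : ℂ} (hx : ∀ i : ℕ, x + i ≠ 0) (k : ℕ) : poch x k ≠ 0 :=
  prod_ne_zero_iff.2 fun i _ => hx i

lemma norm_poch_le_norm_poch {x y : ℂ} (h : ∀ i : ℕ, ‖x + i‖ ≤ ‖y + i‖) (k : ℕ) :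
    ‖poch x k‖ ≤ ‖poch y k‖ := by
  simp only [poch, norm_prod]
  exact prod_le_prod (fun _ _ => norm_nonneg _) fun i _ => h i

lemma one_le_norm_poch {x : ℂ} (hx : 1 ≤ x.re) (k : ℕ) : 1 ≤ ‖poch x k‖ := by
  simp only [poch, norm_prod]
  refine one_le_prod fun i _ => le_trans ?_ (re_le_norm _)
  simp only [add_re, natCast_re]
  linarith [(Nat.cast_nonneg i : (0 : ℝ) ≤ i)]

lemma poch_ne_zero_of_re_pos {x : ℂ} (hx : 0 < x.re) (k : ℕ) : poch x k ≠ 0 :=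
  poch_ne_zero (fun i h => by
    have := congrArg re h
    simp only [add_re, natCast_re, zero_re] at this
    linarith [Nat.cast_nonneg (α := ℝ) i]) k

lemma poch_succ_eq_inv_GammaSeq_mul (s : ℂ) {n : ℕ} (hn : n ≠ 0) :
    poch s (n + 1) = (GammaSeq s n)⁻¹ * ((n : ℂ) ^ s * n.factorial) := by
  have hn' : (n : ℂ) ≠ 0 := by exact_mod_cast hn
  have hX : (n : ℂ) ^ s * n.factorial ≠ 0 :=
    mul_ne_zero (by simp [hn']) (Nat.cast_ne_zero.2 n.factorial_ne_zero)
  rw [GammaSeq, inv_div, div_mul_cancel₀ _ hX]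
  rfl

lemma tendsto_inv_GammaSeq (s : ℂ) :
    Tendsto (fun n => (GammaSeq s n)⁻¹) atTop (𝓝 (Gamma s)⁻¹) := by
  by_cases hs : Gamma s = 0
  -- at a pole `s = -m`, `GammaSeq s n` is eventually a division by `0`, hence `0`
  · obtain ⟨m, rfl⟩ := (Gamma_eq_zero_iff s).1 hs
    rw [hs, inv_zero]
    refine tendsto_const_nhds.congr' ?_
    filter_upwards [eventually_ge_atTop m] with n hn
    have hpoch : poch (-m) (n + 1) = 0 := prod_eq_zero (i := m) (by simp; omega) (by simp)
    rw [GammaSeq, inv_div, ← poch, hpoch, zero_div]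
  · exact (GammaSeq_tendsto_Gamma s).inv₀ hs

lemma tendsto_poch_mul_poch_div {s₁ s₂ t₁ t₂ : ℂ} (h : s₁ + s₂ = t₁ + t₂)
    (ht₁ : Gamma t₁ ≠ 0) (ht₂ : Gamma t₂ ≠ 0) :
    Tendsto (fun n => poch s₁ n * poch s₂ n / (poch t₁ n * poch t₂ n)) atTop
      (𝓝 (Gamma t₁ * Gamma t₂ / (Gamma s₁ * Gamma s₂))) := by
  have hlim := ((tendsto_inv_GammaSeq s₁).mul (tendsto_inv_GammaSeq s₂)).div
    ((tendsto_inv_GammaSeq t₁).mul (tendsto_inv_GammaSeq t₂)) (by simp [ht₁, ht₂])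
  rw [show (Gamma s₁)⁻¹ * (Gamma s₂)⁻¹ / ((Gamma t₁)⁻¹ * (Gamma t₂)⁻¹) =
    Gamma t₁ * Gamma t₂ / (Gamma s₁ * Gamma s₂) by field_simp] at hlim
  rw [← tendsto_add_atTop_iff_nat 1]
  refine hlim.congr' ?_
  filter_upwards [eventually_ne_atTop 0] with n hn
  have hn' : (n : ℂ) ≠ 0 := by exact_mod_cast hn
  have hpow : (n : ℂ) ^ s₁ * (n : ℂ) ^ s₂ = (n : ℂ) ^ t₁ * (n : ℂ) ^ t₂ := by
    rw [← cpow_add _ _ hn', ← cpow_add _ _ hn', h]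
  have hX : (n : ℂ) ^ t₁ * (n : ℂ) ^ t₂ * n.factorial * n.factorial ≠ 0 := by
    have := Nat.cast_ne_zero (R := ℂ).2 n.factorial_ne_zero
    simp [hn', this]
  simp only [Pi.div_apply, poch_succ_eq_inv_GammaSeq_mul _ hn]
  calc _ = (GammaSeq s₁ n)⁻¹ * (GammaSeq s₂ n)⁻¹ *
        ((n : ℂ) ^ s₁ * (n : ℂ) ^ s₂ * n.factorial * n.factorial) /
        ((GammaSeq t₁ n)⁻¹ * (GammaSeq t₂ n)⁻¹ *
        ((n : ℂ) ^ t₁ * (n : ℂ) ^ t₂ * n.factorial * n.factorial)) := by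
          rw [hpow, mul_div_mul_right _ _ hX]
    _ = _ := by ring

noncomputable def hyperTerm (a b c : ℂ) (k : ℕ) : ℂ :=
  poch a k * poch b k / (k.factorial * poch c k)

lemma hyperTerm_zero (a b c : ℂ) : hyperTerm a b c 0 = 1 := by simp [hyperTerm, poch_zero]

lemma hyperTerm_succ_mul {c : ℂ} {k : ℕ} (hc : c + k ≠ 0) (a b : ℂ) :
    ((k : ℂ) + 1) * (c + k) * hyperTerm a b c (k + 1)
      = (a + k) * (b + k) * hyperTerm a b c k := by
  rw [hyperTerm, hyperTerm, poch_succ, poch_succ, poch_succ, Nat.factorial_succ]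
  by_cases h : poch c k = 0
  · simp [h]
  · have hk : (k : ℂ) + 1 ≠ 0 := by exact_mod_cast k.succ_ne_zero
    have hfac := Nat.cast_ne_zero (R := ℂ).2 k.factorial_ne_zero
    push_cast
    field_simp

lemma mul_hyperTerm_eq_mul_hyperTerm_add_one {c : ℂ} {k : ℕ} (h : poch c (k + 1) ≠ 0)
    (a b : ℂ) : c * hyperTerm a b c k = (c + k) * hyperTerm a b (c + 1) k := by
  have hrel : c * poch (c + 1) k = poch c k * (c + k) := by rw [← poch_succ', poch_succ]
  have hck : poch c k * (c + k) ≠ 0 := poch_succ c k ▸ h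
  have hc₁ : c * poch (c + 1) k ≠ 0 := poch_succ' c k ▸ h
  have hfac := Nat.cast_ne_zero (R := ℂ).2 k.factorial_ne_zero
  rw [hyperTerm, hyperTerm]
  field_simp [left_ne_zero_of_mul hck, right_ne_zero_of_mul hc₁]
  linear_combination poch a k * poch b k * hrel

lemma tendsto_hyperTerm_mul_cpow (a b c : ℂ) :
    Tendsto (fun n : ℕ => ((n : ℂ) + 1) * (n : ℂ) ^ (c - a - b) * hyperTerm a b c (n + 1))
      atTop (𝓝 (Gamma c / (Gamma a * Gamma b))) := by
  have hlim := ((tendsto_inv_GammaSeq a).mul (tendsto_inv_GammaSeq b)).mul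
    (GammaSeq_tendsto_Gamma c)
  rw [show (Gamma a)⁻¹ * (Gamma b)⁻¹ * Gamma c = Gamma c / (Gamma a * Gamma b) by
    field_simp] at hlim
  refine hlim.congr' ?_
  filter_upwards [eventually_ne_atTop 0] with n hn
  have hn' : (n : ℂ) ≠ 0 := by exact_mod_cast hn
  have hfac := Nat.cast_ne_zero (R := ℂ).2 n.factorial_ne_zero
  have hn1 : (n : ℂ) + 1 ≠ 0 := by exact_mod_cast n.succ_ne_zero
  have hpc : (poch c (n + 1))⁻¹ = GammaSeq c n * ((n : ℂ) ^ c * n.factorial)⁻¹ := by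
    rw [poch_succ_eq_inv_GammaSeq_mul _ hn, mul_inv, inv_inv]
  have hpow : (n : ℂ) ^ (c - a - b) * ((n : ℂ) ^ a * (n : ℂ) ^ b) = (n : ℂ) ^ c := by
    rw [← cpow_add _ _ hn', ← cpow_add _ _ hn']; ring_nf
  have hnc : (n : ℂ) ^ c ≠ 0 := by simp [hn']
  rw [hyperTerm, div_eq_mul_inv, mul_inv, hpc, poch_succ_eq_inv_GammaSeq_mul a hn,
    poch_succ_eq_inv_GammaSeq_mul b hn, Nat.factorial_succ, Nat.cast_mul]
  push_cast
  field_simp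
  linear_combination -(GammaSeq a n)⁻¹ * (GammaSeq b n)⁻¹ * GammaSeq c n * hpow

lemma isBigO_hyperTerm (a b c : ℂ) :
    (fun n : ℕ => hyperTerm a b c (n + 1)) =O[atTop]
      fun n : ℕ => (n : ℝ) ^ (-(c - a - b).re - 1) := by
  obtain ⟨M, hM⟩ := ((tendsto_hyperTerm_mul_cpow a b c).isBigO_one ℝ).bound
  refine IsBigO.of_bound M ?_
  filter_upwards [hM, eventually_ne_atTop 0] with n hMn hn
  have hn : (0 : ℝ) < n := by positivity
  have hn1 : ‖(n : ℂ) + 1‖ = n + 1 := by exact_mod_cast Complex.norm_natCast (n + 1)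
  rw [norm_mul, norm_mul, hn1, norm_natCast_cpow_of_pos (by exact_mod_cast hn), norm_one,
    mul_one] at hMn
  rw [Real.norm_of_nonneg (by positivity), Real.rpow_sub_one hn.ne', Real.rpow_neg hn.le,
    show M * (((n : ℝ) ^ (c - a - b).re)⁻¹ / n) = M / ((n : ℝ) ^ (c - a - b).re * n) by ring,
    le_div_iff₀ (by positivity)]
  calc ‖hyperTerm a b c (n + 1)‖ * ((n : ℝ) ^ (c - a - b).re * n)
      ≤ ((n : ℝ) + 1) * (n : ℝ) ^ (c - a - b).re * ‖hyperTerm a b c (n + 1)‖ := by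
        nlinarith [norm_nonneg (hyperTerm a b c (n + 1)), Real.rpow_pos_of_pos hn (c - a - b).re]
    _ ≤ M := hMn

lemma summable_norm_hyperTerm {a b c : ℂ} (h : 0 < (c - a - b).re) :
    Summable fun k => ‖hyperTerm a b c k‖ := by
  rw [← summable_nat_add_iff 1]
  exact summable_of_isBigO_nat (Real.summable_nat_rpow.2 (by linarith))
    (isBigO_hyperTerm a b c).norm_left

lemma hasSum_sub_succ {G : Type*} [AddCommGroup G] [TopologicalSpace G]
    [IsTopologicalAddGroup G] [T2Space G] {f : ℕ → G} (hs : Summable fun k => f k - f (k + 1))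
    (hf : Tendsto f atTop (𝓝 0)) : HasSum (fun k => f k - f (k + 1)) (f 0) := by
  rw [hs.hasSum_iff_tendsto_nat]
  simp_rw [sum_range_sub']
  simpa using tendsto_const_nhds.sub hf

lemma isBigO_natCast_add_mul_add (z w : ℂ) :
    (fun n : ℕ => ((n : ℂ) + z) * (n + w)) =O[atTop] fun n : ℕ => (n : ℝ) ^ (2 : ℝ) := by
  refine IsBigO.of_bound ((1 + ‖z‖) * (1 + ‖w‖)) ?_
  filter_upwards [eventually_ge_atTop 1] with n hn
  have hn : (1 : ℝ) ≤ n := by exact_mod_cast hn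
  have hz : ‖(n : ℂ) + z‖ ≤ (1 + ‖z‖) * n := by
    have := norm_add_le (n : ℂ) z
    rw [Complex.norm_natCast] at this
    nlinarith [norm_nonneg z]
  have hw : ‖(n : ℂ) + w‖ ≤ (1 + ‖w‖) * n := by
    have := norm_add_le (n : ℂ) w
    rw [Complex.norm_natCast] at this
    nlinarith [norm_nonneg w]
  rw [norm_mul, Real.norm_of_nonneg (by positivity), Real.rpow_two]
  calc ‖(n : ℂ) + z‖ * ‖(n : ℂ) + w‖ ≤ (1 + ‖z‖) * n * ((1 + ‖w‖) * n) :=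
        mul_le_mul hz hw (norm_nonneg _) (by positivity)
    _ = _ := by ring

lemma tendsto_natCast_mul_add_mul_hyperTerm {a b c : ℂ} (h : 1 < (c - a - b).re) (z : ℂ) :
    Tendsto (fun k : ℕ => (k : ℂ) * (z + k) * hyperTerm a b c k) atTop (𝓝 0) := by
  rw [← tendsto_add_atTop_iff_nat 1]
  have hO : (fun n : ℕ => ((n + 1 : ℕ) : ℂ) * (z + (n + 1 : ℕ)) * hyperTerm a b c (n + 1))
      =O[atTop] fun n : ℕ => (n : ℝ) ^ (2 : ℝ) * (n : ℝ) ^ (-(c - a - b).re - 1) :=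
    ((isBigO_natCast_add_mul_add 1 (z + 1)).mul (isBigO_hyperTerm a b c)).congr_left
      fun n => by push_cast; ring
  have hpow : Tendsto (fun n : ℕ => (n : ℝ) ^ (-((c - a - b).re - 1))) atTop (𝓝 0) :=
    (tendsto_rpow_neg_atTop (by linarith)).comp tendsto_natCast_atTop_atTop
  refine hO.trans_tendsto (hpow.congr' ?_)
  filter_upwards [eventually_ne_atTop 0] with n hn
  have hn : (0 : ℝ) < n := by positivity
  rw [← Real.rpow_add hn]
  ring_nf

lemma tsum_hyperTerm_contiguous {a b c : ℂ} (h : 0 < (c - a - b).re)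
    (hc : ∀ i : ℕ, c + i ≠ 0) :
    c * (c - a - b) * ∑' k, hyperTerm a b c k
      = (c - a) * (c - b) * ∑' k, hyperTerm a b (c + 1) k := by
  have h₁ : (c + 1 - a - b).re = (c - a - b).re + 1 := by simp; ring
  let g : ℕ → ℂ := fun k => k * (c + k) * hyperTerm a b (c + 1) k
  have htel (k : ℕ) : c * (c - a - b) * hyperTerm a b c k
      - (c - a) * (c - b) * hyperTerm a b (c + 1) k = g k - g (k + 1) := by
    have e₁ := mul_hyperTerm_eq_mul_hyperTerm_add_one (poch_ne_zero hc (k + 1)) a b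
    have e₂ := hyperTerm_succ_mul (c := c + 1) (k := k)
      (by simpa [add_right_comm, add_assoc] using hc (k + 1)) a b
    simp only [g]
    push_cast
    linear_combination (c - a - b) * e₁ + e₂
  have hs := (summable_norm_hyperTerm h).of_norm
  have hs₁ := (summable_norm_hyperTerm (a := a) (b := b) (c := c + 1) (by linarith)).of_norm
  have hsum := (hs.hasSum.mul_left (c * (c - a - b))).sub
    (hs₁.hasSum.mul_left ((c - a) * (c - b)))
  have hg := hasSum_sub_succ (hsum.summable.congr htel)
    (tendsto_natCast_mul_add_mul_hyperTerm (by linarith) c)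
  simp only [htel] at hsum
  linear_combination hsum.unique hg + (by simp [g] : g 0 = 0)

lemma poch_mul_poch_mul_tsum_hyperTerm {a b c : ℂ} (h : 0 < (c - a - b).re)
    (hc : ∀ i : ℕ, c + i ≠ 0) (n : ℕ) :
    poch c n * poch (c - a - b) n * ∑' k, hyperTerm a b c k
      = poch (c - a) n * poch (c - b) n * ∑' k, hyperTerm a b (c + n) k := by
  induction n with
  | zero => simp [poch_zero]
  | succ n ih =>
    have hn : 0 < (c + n - a - b).re := by
      have : (c + n - a - b).re = (c - a - b).re + n := by simp; ring
      rw [this]; positivity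
    have hcont := tsum_hyperTerm_contiguous hn fun i => by simpa [add_assoc] using hc (n + i)
    rw [Nat.cast_succ, ← add_assoc]
    simp only [poch_succ]
    linear_combination (c + n) * (c + n - a - b) * ih + poch (c - a) n * poch (c - b) n * hcont

lemma norm_ofReal_add_natCast {x : ℝ} (hx : 0 ≤ x) (i : ℕ) : ‖(x : ℂ) + i‖ = x + i := by
  rw [← ofReal_natCast, ← ofReal_add, Complex.norm_of_nonneg (by positivity)]

lemma norm_hyperTerm_le {a b c a' b' c' : ℂ} (ha : ∀ i : ℕ, ‖a + i‖ ≤ ‖a' + i‖)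
    (hb : ∀ i : ℕ, ‖b + i‖ ≤ ‖b' + i‖) (hc : ∀ i : ℕ, ‖c' + i‖ ≤ ‖c + i‖)
    (hc' : ∀ i : ℕ, c' + i ≠ 0) (k : ℕ) : ‖hyperTerm a b c k‖ ≤ ‖hyperTerm a' b' c' k‖ := by
  simp only [hyperTerm, norm_div, norm_mul]
  have hc'k : 0 < ‖poch c' k‖ := norm_pos_iff.2 (poch_ne_zero hc' k)
  gcongr
  · exact mul_pos (norm_pos_iff.2 (Nat.cast_ne_zero.2 k.factorial_ne_zero)) hc'k
  · exact norm_poch_le_norm_poch ha k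
  · exact norm_poch_le_norm_poch hb k
  · exact norm_poch_le_norm_poch hc k

lemma tendsto_inv_poch_add_nat (c : ℂ) (k : ℕ) :
    Tendsto (fun n : ℕ => (poch (c + n) (k + 1))⁻¹) atTop (𝓝 0) := by
  have hinv : Tendsto (fun n : ℕ => (c + n)⁻¹) atTop (𝓝 0) :=
    tendsto_inv₀_cobounded.comp
      ((tendsto_const_add_cobounded c).comp tendsto_natCast_atTop_cobounded)
  refine squeeze_zero_norm' (a := fun n : ℕ => ‖(c + n)⁻¹‖) ?_ (by simpa using hinv.norm)
  filter_upwards [tendsto_natCast_atTop_atTop.eventually_ge_atTop (-c.re)] with n hn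
  have h1 : 1 ≤ ‖poch (c + n + 1) k‖ := one_le_norm_poch (by simp; linarith) k
  rw [poch_succ', mul_inv, norm_mul]
  refine mul_le_of_le_one_right (norm_nonneg _) ?_
  rw [norm_inv]
  exact inv_le_one_of_one_le₀ h1

lemma tendsto_hyperTerm_add_nat (a b c : ℂ) (k : ℕ) :
    Tendsto (fun n : ℕ => hyperTerm a b (c + n) k) atTop (𝓝 (if k = 0 then 1 else 0)) := by
  cases k with
  | zero => simp [hyperTerm_zero]
  | succ k =>
    have := (tendsto_inv_poch_add_nat c k).const_mul
      (poch a (k + 1) * poch b (k + 1) / (k + 1).factorial)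
    rw [mul_zero] at this
    rw [if_neg k.succ_ne_zero]
    exact this.congr fun n => by rw [hyperTerm]; ring

lemma tendsto_tsum_hyperTerm_add_nat (a b c : ℂ) :
    Tendsto (fun n : ℕ => ∑' k, hyperTerm a b (c + n) k) atTop (𝓝 1) := by
  set r : ℝ := ‖a‖ + ‖b‖ + 1
  have hr : ∀ i : ℕ, (r : ℂ) + i ≠ 0 := fun i => by
    rw [← norm_ne_zero_iff, norm_ofReal_add_natCast (by positivity)]; positivity
  have hsum := summable_norm_hyperTerm (a := ‖a‖) (b := ‖b‖) (c := r)
    (by simp only [sub_re, ofReal_re, r]; linarith)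
  have := tendsto_tsum_of_dominated_convergence hsum (tendsto_hyperTerm_add_nat a b c) ?_
  · rwa [tsum_ite_eq] at this
  filter_upwards [tendsto_natCast_atTop_atTop.eventually_ge_atTop (r - c.re)] with n hn k
  refine norm_hyperTerm_le (fun i => ?_) (fun i => ?_) (fun i => ?_) hr k
  · rw [norm_ofReal_add_natCast (norm_nonneg _)]
    exact (norm_add_le _ _).trans_eq (by simp)
  · rw [norm_ofReal_add_natCast (norm_nonneg _)]
    exact (norm_add_le _ _).trans_eq (by simp)
  · rw [norm_ofReal_add_natCast (by positivity)]
    refine le_trans ?_ (re_le_norm _)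
    simp
    linarith

/-- Gauss's ₂F₁ summation theorem. -/
theorem gauss_2F1 (a b c : ℂ) (hconv : 0 < (c - a - b).re)
    (hc : ∀ m : ℕ, c ≠ -(m : ℂ)) :
    ∑' k : ℕ, poch a k * poch b k / ((k.factorial : ℂ) * poch c k)
      = Complex.Gamma c * Complex.Gamma (c - a - b) /
        (Complex.Gamma (c - a) * Complex.Gamma (c - b)) := by
  have hc' : ∀ i : ℕ, c + i ≠ 0 := fun i h => hc i (eq_neg_of_add_eq_zero_left h)
  have hF (n : ℕ) : ∑' k, hyperTerm a b c k = poch (c - a) n * poch (c - b) n /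
      (poch c n * poch (c - a - b) n) * ∑' k, hyperTerm a b (c + n) k := by
    rw [div_mul_eq_mul_div, eq_div_iff (mul_ne_zero (poch_ne_zero hc' n)
      (poch_ne_zero_of_re_pos hconv n)), mul_comm, poch_mul_poch_mul_tsum_hyperTerm hconv hc']
  have hlim := (tendsto_poch_mul_poch_div (s₁ := c - a) (s₂ := c - b) (by ring)
    (Gamma_ne_zero hc) (Gamma_ne_zero_of_re_pos hconv)).mul (tendsto_tsum_hyperTerm_add_nat a b c)
  rw [mul_one] at hlim
  exact tendsto_nhds_unique (tendsto_const_nhds.congr hF) hlim
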